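/- arXiv:2301.01985 — 7 statements merged into one kernel-verified Lean document; each statement's English description precedes it below -/
import Mathlib

section
/- Let K be a field of characteristic 0, let F : ℕ → K be a sequence, and let a_0, …, a_J ∈ K[k] with a_J ≠ 0 be polynomials such that ∑_{i=0}^{J} a_i(k) F(k+i) = 0 for every k ∈ ℕ. For a polynomial x ∈ K[k] define u_i(k) = ∑_{j=1}^{J-i} a_{i+j}(k-j) x(k-j) for i = 0, 1, …, J-1 (polynomial evaluation at the integer k-j). Then for every x ∈ K[k] and every k ∈ ℕ one has the telescoping identity (∑_{i=0}^{J} a_i(k-i) x(k-i)) · F(k) = (∑_{i=0}^{J-1} u_i(k) F(k+i)) − (∑_{i=0}^{J-1} u_i(k+1) F(k+1+i)). -/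
open Polynomial Finset

/-!
Write `b i s = a i s * x s`, so that `L* x (t) = ∑ i ≤ J, b i (t - i)` and
`u i t = ∑ 1 ≤ j ≤ J - i, b (i + j) (t - j)`. Peeling off the `j = 1` term gives the recursion
`u i (t + 1) = b (i + 1) t + u (i + 1) t` with `u J = 0`, while `L* x (t) = b 0 t + u 0 t`.
Substituting the recursion into the shifted sum, the `b`-part is `x t` times the recurrence
`∑ i ≤ J, a i t * F (i)` without its `i = 0` term, i.e. `-a 0 t * x t * F 0`, and the `u`-part
telescopes against the unshifted sum up to `u 0 t * F 0`.
-/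

theorem Finset.sum_Icc_one_eq_sum_range {M : Type*} [AddCommMonoid M] (f : ℕ → M) (n : ℕ) :
    ∑ j ∈ Icc 1 n, f j = ∑ j ∈ range n, f (j + 1) := by
  rw [range_eq_Ico, sum_Ico_add' f 0 n 1, zero_add, Ico_add_one_right_eq_Icc]

section AdjointTail

variable {R : Type*} [CommRing R] (a : ℕ → R → R) (x : R → R) (J : ℕ)

/-- The paper's `u i`. -/
def adjointTail (i : ℕ) (t : R) : R :=
  ∑ j ∈ Icc 1 (J - i), a (i + j) (t - j) * x (t - j)

@[simp]
theorem adjointTail_self (t : R) : adjointTail a x J J t = 0 := by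
  simp [adjointTail]

theorem adjointTail_add_one {i : ℕ} (hi : i < J) (t : R) :
    adjointTail a x J i (t + 1) = a (i + 1) t * x t + adjointTail a x J (i + 1) t := by
  obtain ⟨n, hn⟩ : ∃ n, J - i = n + 1 := ⟨J - (i + 1), by omega⟩
  have hn' : J - (i + 1) = n := by omega
  simp only [adjointTail, sum_Icc_one_eq_sum_range, hn, hn', sum_range_succ']
  rw [add_comm]
  congr 1
  · norm_num
  · refine sum_congr rfl fun j _ => ?_
    rw [show i + (j + 1 + 1) = i + 1 + (j + 1) by omega]
    push_cast
    ring_nf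

theorem sum_adjoint_eq_add_adjointTail (t : R) :
    ∑ i ∈ range (J + 1), a i (t - i) * x (t - i) = a 0 t * x t + adjointTail a x J 0 t := by
  rw [sum_range_succ', add_comm, adjointTail, Nat.sub_zero, sum_Icc_one_eq_sum_range]
  simp only [Nat.cast_zero, sub_zero, zero_add]

theorem adjoint_mul_eq_sub_shift (F : ℕ → R) (t : R)
    (hF : ∑ i ∈ range (J + 1), a i t * F i = 0) :
    (∑ i ∈ range (J + 1), a i (t - i) * x (t - i)) * F 0
      = ∑ i ∈ range J, adjointTail a x J i t * F i
        - ∑ i ∈ range J, adjointTail a x J i (t + 1) * F (i + 1) := by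
  have hshift : ∑ i ∈ range J, adjointTail a x J i (t + 1) * F (i + 1)
      = x t * ∑ i ∈ range J, a (i + 1) t * F (i + 1)
        + ∑ i ∈ range J, adjointTail a x J (i + 1) t * F (i + 1) := by
    rw [mul_sum, ← sum_add_distrib]
    refine sum_congr rfl fun i hi => ?_
    rw [adjointTail_add_one a x J (mem_range.mp hi)]
    ring
  have hrec : ∑ i ∈ range J, a (i + 1) t * F (i + 1) = -(a 0 t * F 0) := by
    rw [sum_range_succ'] at hF
    exact eq_neg_of_add_eq_zero_left hF
  have htel : ∑ i ∈ range J, adjointTail a x J (i + 1) t * F (i + 1)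
      = ∑ i ∈ range J, adjointTail a x J i t * F i - adjointTail a x J 0 t * F 0 := by
    have h := sum_range_succ' (fun i => adjointTail a x J i t * F i) J
    rw [sum_range_succ, adjointTail_self, zero_mul, add_zero] at h
    rw [h, add_sub_cancel_right]
  rw [hshift, hrec, htel, sum_adjoint_eq_add_adjointTail]
  ring

end AdjointTail

theorem telescoping_identity_general {K : Type*} [Field K]
    (J : ℕ) (a : ℕ → Polynomial K)
    (F : ℕ → K)
    (hann : ∀ k : ℕ, ∑ i ∈ Finset.range (J + 1), (a i).eval (k : K) * F (k + i) = 0)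
    (x : Polynomial K) (k : ℕ) :
    (∑ i ∈ Finset.range (J + 1), (a i).eval ((k : K) - i) * x.eval ((k : K) - i)) * F k
      = (∑ i ∈ Finset.range J,
          (∑ j ∈ Finset.Icc 1 (J - i),
            (a (i + j)).eval ((k : K) - j) * x.eval ((k : K) - j)) * F (k + i))
        - (∑ i ∈ Finset.range J,
          (∑ j ∈ Finset.Icc 1 (J - i),
            (a (i + j)).eval (((k : K) + 1) - j) * x.eval (((k : K) + 1) - j)) * F (k + 1 + i)) := by
  have h := adjoint_mul_eq_sub_shift (fun i s => (a i).eval s) x.eval J (fun i => F (k + i)) k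
    (hann k)
  rw [add_zero] at h
  rw [h]
  congr 1
  exact sum_congr rfl fun i _ => by rw [← add_assoc, add_right_comm]; rfl

theorem telescoping_identity {K : Type*} [Field K] [CharZero K]
    (J : ℕ) (a : ℕ → Polynomial K) (hJ : a J ≠ 0)
    (F : ℕ → K)
    (hann : ∀ k : ℕ, ∑ i ∈ Finset.range (J + 1), (a i).eval (k : K) * F (k + i) = 0)
    (x : Polynomial K) (k : ℕ) :
    (∑ i ∈ Finset.range (J + 1), (a i).eval ((k : K) - i) * x.eval ((k : K) - i)) * F k
      = (∑ i ∈ Finset.range J,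
          (∑ j ∈ Finset.Icc 1 (J - i),
            (a (i + j)).eval ((k : K) - j) * x.eval ((k : K) - j)) * F (k + i))
        - (∑ i ∈ Finset.range J,
          (∑ j ∈ Finset.Icc 1 (J - i),
            (a (i + j)).eval (((k : K) + 1) - j) * x.eval (((k : K) + 1) - j)) * F (k + 1 + i)) :=
  telescoping_identity_general J a F hann x k
end

section
/- Let K be a field of characteristic 0 and let L = ∑_{i=0}^{J} a_i(k) σ^i with a_i ∈ K[k], a_J ≠ 0, and d = deg(L) ≥ 0. Suppose L is nondegenerated (R_L = ∅) and there exists γ ∈ K such that, as polynomial identities in k, a_i(γ+k) = (−1)^d · a_{J−i}(γ−k−J) for all i = 0, 1, …, ⌊J/2⌋. Then for every positive integer m, the polynomial (k−γ)^m lies in the sum of the difference space S_L and the K-linear span of the polynomials (k−γ)^i with 0 ≤ i < d and i ≡ m (mod 2). -/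
/-!
In the forward-difference basis the adjoint reads `L* x = ∑ b_ℓ · (Δ^ℓ x)(k - J)`, and `Δ^ℓ`
lowers degrees by exactly `ℓ`, multiplying the leading coefficient by `s(s-1)⋯(s-ℓ+1)`.
Hence `L*` raises degrees by `d` and multiplies the leading coefficient of a degree-`s`
polynomial by `f(s) ≠ 0`. The power-partible condition says that `L*` intertwines the
reflections `k ↦ 2γ - J - k` and `k ↦ 2γ - k` up to the sign `(-1)^d`; so `L*` sends
`(k - γ + J/2)^e` to a polynomial of degree `e + d` that is even or odd about `γ` according
to the parity of `e + d`. Subtracting multiples of these from `(k - γ)^m` lowers its degree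
and keeps its parity about `γ`, until the degree drops below `d`.
-/

open Polynomial Finset

namespace Polynomial

variable {R : Type*} [CommRing R]

noncomputable def forwardDiff : Module.End R R[X] := taylor 1 - 1

theorem forwardDiff_apply (p : R[X]) : forwardDiff p = taylor 1 p - p := rfl

theorem taylor_one_pow (n : ℕ) : taylor (1 : R) ^ n = taylor (n : R) := by
  induction n with
  | zero => simp [taylor_zero', Module.End.one_eq_id]
  | succ n ih =>
    refine LinearMap.ext fun p => ?_
    rw [pow_succ, Module.End.mul_apply, ih, taylor_taylor, Nat.cast_succ]

theorem taylor_natCast_eq_sum (n : ℕ) (p : R[X]) :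
    taylor (n : R) p = ∑ ℓ ∈ range (n + 1), n.choose ℓ • (forwardDiff ^ ℓ) p := by
  have h : taylor (1 : R) = forwardDiff + 1 := (sub_add_cancel _ _).symm
  rw [← taylor_one_pow, h, (Commute.one_right _).add_pow, LinearMap.coe_sum, Finset.sum_apply]
  refine sum_congr rfl fun ℓ _ => ?_
  rw [one_pow, mul_one, Module.End.mul_apply, Module.End.natCast_apply, map_nsmul]

theorem coeff_forwardDiff {p : R[X]} {n : ℕ} (hp : p.natDegree ≤ n + 1) :
    (forwardDiff p).coeff n = ((n + 1 : ℕ) : R) * p.coeff (n + 1) := by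
  have h1 : (hasseDeriv n p).natDegree ≤ 1 := (natDegree_hasseDeriv_le p n).trans (by omega)
  rw [forwardDiff_apply, coeff_sub, taylor_coeff, eq_X_add_C_of_natDegree_le_one h1]
  simp [hasseDeriv_coeff, add_comm 1 n]

theorem natDegree_forwardDiff_le {p : R[X]} {n : ℕ} (hp : p.natDegree ≤ n + 1) :
    (forwardDiff p).natDegree ≤ n := by
  refine natDegree_le_iff_coeff_eq_zero.2 fun k hk => ?_
  rw [coeff_forwardDiff (by omega), coeff_eq_zero_of_natDegree_lt (by omega), mul_zero]

theorem natDegree_forwardDiff_pow_le_and_coeff {p : R[X]} {s : ℕ} (hp : p.natDegree ≤ s)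
    (ℓ : ℕ) : ((forwardDiff ^ ℓ) p).natDegree ≤ s - ℓ ∧
      ((forwardDiff ^ ℓ) p).coeff (s - ℓ) = s.descFactorial ℓ * p.coeff s := by
  induction ℓ with
  | zero => simpa using hp
  | succ ℓ ih =>
    obtain ⟨hdeg, hcoeff⟩ := ih
    have hdeg' : ((forwardDiff ^ ℓ) p).natDegree ≤ s - (ℓ + 1) + 1 := hdeg.trans (by omega)
    rw [pow_succ', Module.End.mul_apply]
    refine ⟨natDegree_forwardDiff_le hdeg', ?_⟩
    rw [coeff_forwardDiff hdeg', Nat.descFactorial_succ]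
    rcases le_or_gt s ℓ with h | h
    · rw [Nat.sub_eq_zero_of_le h, zero_mul, Nat.cast_zero, zero_mul,
        coeff_eq_zero_of_natDegree_lt (by omega), mul_zero]
    · rw [show s - (ℓ + 1) + 1 = s - ℓ by omega, hcoeff]
      push_cast
      ring

theorem forwardDiff_pow_eq_zero_of_natDegree_lt {p : R[X]} {ℓ : ℕ} (h : p.natDegree < ℓ) :
    (forwardDiff ^ ℓ) p = 0 := by
  obtain ⟨hdeg, hcoeff⟩ := natDegree_forwardDiff_pow_le_and_coeff (le_refl p.natDegree) ℓ
  rw [Nat.sub_eq_zero_of_le h.le] at hdeg hcoeff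
  rw [eq_C_of_natDegree_le_zero hdeg, hcoeff, Nat.descFactorial_eq_zero_iff_lt.2 h,
    Nat.cast_zero, zero_mul, C_0]

theorem coeff_taylor_of_natDegree_le {p : R[X]} {n : ℕ} (r : R) (hp : p.natDegree ≤ n) :
    (taylor r p).coeff n = p.coeff n := by
  rcases hp.lt_or_eq with h | rfl
  · rw [coeff_eq_zero_of_natDegree_lt h, coeff_eq_zero_of_natDegree_lt (by rwa [natDegree_taylor])]
  · exact coeff_taylor_natDegree r p

theorem X_sub_C_pow_comp_C_two_mul_sub_X (c : R) (n : ℕ) :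
    ((X - C c) ^ n).comp (C (2 * c) - X) = (-1 : R) ^ n • (X - C c) ^ n := by
  rw [pow_comp, sub_comp, X_comp, C_comp, show C (2 * c) - X - C c = -(X - C c) by
    rw [C_mul, map_ofNat]; ring, neg_pow, smul_eq_C_mul, map_pow, map_neg, map_one]

theorem neg_one_pow_natDegree_eq_of_comp_eq [IsDomain R] {p : R[X]}
    (hp0 : p ≠ 0) {c : R} {m : ℕ} (hp : p.comp (C c - X) = (-1 : R) ^ m • p) :
    (-1 : R) ^ p.natDegree = (-1) ^ m := by
  have hlc := congrArg leadingCoeff hp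
  rw [leadingCoeff_comp (by rw [← neg_sub, natDegree_neg, natDegree_X_sub_C]; exact one_ne_zero),
    ← neg_sub, leadingCoeff_neg, leadingCoeff_X_sub_C, smul_eq_C_mul, leadingCoeff_mul,
    leadingCoeff_C, mul_comm] at hlc
  exact mul_right_cancel₀ (leadingCoeff_ne_zero.2 hp0) hlc

end Polynomial

theorem mod_two_eq_of_neg_one_pow_eq {R : Type*} [Ring R] (h1 : (-1 : R) ≠ 1) {i m : ℕ}
    (h : (-1 : R) ^ i = (-1) ^ m) : i % 2 = m % 2 := by
  rcases Nat.even_or_odd i with hi | hi <;> rcases Nat.even_or_odd m with hm | hm <;>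
    simp only [hi.neg_one_pow, hm.neg_one_pow] at h
  · rw [Nat.even_iff.1 hi, Nat.even_iff.1 hm]
  · exact absurd h.symm h1
  · exact absurd h h1
  · rw [Nat.odd_iff.1 hi, Nat.odd_iff.1 hm]

section Adjoint

variable {R : Type*} [CommRing R]

noncomputable def diffAdjoint (J : ℕ) (a : ℕ → R[X]) : R[X] →ₗ[R] R[X] where
  toFun x := ∑ i ∈ range (J + 1), (a i).comp (X - (i : R[X])) * x.comp (X - (i : R[X]))
  map_add' x y := by simp only [add_comp, mul_add, sum_add_distrib]
  map_smul' c x := by simp only [smul_comp, mul_smul_comm, smul_sum, RingHom.id_apply]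

/-- `diffAdjointCoeff J a ℓ` is the paper's `b_ℓ` and `diffAdjointIndicial J a d` its `f`. -/
noncomputable def diffAdjointCoeff (J : ℕ) (a : ℕ → R[X]) (ℓ : ℕ) : R[X] :=
  ∑ j ∈ Icc ℓ J, (j.choose ℓ : R) • (a (J - j)).comp (X + C ((j : R) - (J : R)))

noncomputable def diffAdjointIndicial (J : ℕ) (a : ℕ → R[X]) (d s : ℕ) : R :=
  ∑ ℓ ∈ range (J + 1), (diffAdjointCoeff J a ℓ).coeff (d + ℓ) * (s.descFactorial ℓ : R)

def IsPowerPartible (J d : ℕ) (a : ℕ → R[X]) (γ : R) : Prop :=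
  ∀ i ≤ J / 2,
    (a i).comp (C γ + X) = (-1 : R[X]) ^ d * (a (J - i)).comp (C γ - X - (J : R[X]))

variable {J : ℕ} {a : ℕ → R[X]}

theorem diffAdjoint_apply (x : R[X]) : diffAdjoint J a x =
    ∑ i ∈ range (J + 1), (a i).comp (X - (i : R[X])) * x.comp (X - (i : R[X])) := rfl

theorem diffAdjoint_eq_sum_forwardDiff (x : R[X]) :
    diffAdjoint J a x = ∑ ℓ ∈ range (J + 1),
      diffAdjointCoeff J a ℓ * taylor (-(J : R)) ((forwardDiff ^ ℓ) x) := by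
  have hterm : ∀ j ∈ range (J + 1),
      (a (J - j)).comp (X - ((J - j : ℕ) : R[X])) * x.comp (X - ((J - j : ℕ) : R[X])) =
        ∑ ℓ ∈ range (j + 1), (j.choose ℓ : R) • ((a (J - j)).comp (X + C ((j : R) - J)) *
          taylor (-(J : R)) ((forwardDiff ^ ℓ) x)) := by
    intro j hj
    have hshift : X - ((J - j : ℕ) : R[X]) = X + C ((j : R) - J) := by
      rw [Nat.cast_sub (by simpa [Nat.lt_succ_iff] using hj), ← C_eq_natCast, ← C_eq_natCast]
      simp only [map_sub, map_natCast]
      ring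
    have hx : x.comp (X + C ((j : R) - J)) = taylor (-(J : R)) (taylor (j : R) x) := by
      rw [taylor_taylor, taylor_apply, neg_add_eq_sub]
    rw [hshift, hx, taylor_natCast_eq_sum, map_sum, mul_sum]
    refine sum_congr rfl fun ℓ _ => ?_
    rw [map_nsmul, mul_smul_comm, Nat.cast_smul_eq_nsmul]
  rw [diffAdjoint_apply, ← sum_range_reflect]
  simp only [Nat.add_sub_cancel]
  rw [sum_congr rfl hterm, sum_comm' (t' := range (J + 1)) (s' := fun ℓ => Icc ℓ J)
    (by intro j ℓ; simp only [mem_range, mem_Icc]; omega)]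
  refine sum_congr rfl fun ℓ _ => ?_
  rw [diffAdjointCoeff, sum_mul]
  exact sum_congr rfl fun j _ => (smul_mul_assoc _ _ _).symm

theorem natDegree_diffAdjoint_le_and_coeff {d s : ℕ}
    (hb : ∀ ℓ ∈ range (J + 1), (diffAdjointCoeff J a ℓ).natDegree ≤ d + ℓ) {x : R[X]}
    (hx : x.natDegree ≤ s) : (diffAdjoint J a x).natDegree ≤ s + d ∧
      (diffAdjoint J a x).coeff (s + d) = diffAdjointIndicial J a d s * x.coeff s := by
  have hterm : ∀ ℓ ∈ range (J + 1),
      (diffAdjointCoeff J a ℓ * taylor (-(J : R)) ((forwardDiff ^ ℓ) x)).natDegree ≤ s + d ∧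
      (diffAdjointCoeff J a ℓ * taylor (-(J : R)) ((forwardDiff ^ ℓ) x)).coeff (s + d) =
        (diffAdjointCoeff J a ℓ).coeff (d + ℓ) * s.descFactorial ℓ * x.coeff s := by
    intro ℓ hℓ
    rcases le_or_gt ℓ s with hℓs | hsℓ
    · obtain ⟨hdeg, hcoeff⟩ := natDegree_forwardDiff_pow_le_and_coeff hx ℓ
      have hdeg' := (natDegree_taylor _ (-(J : R))).trans_le hdeg
      rw [show s + d = (d + ℓ) + (s - ℓ) by omega]
      refine ⟨natDegree_mul_le_of_le (hb ℓ hℓ) hdeg', ?_⟩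
      rw [coeff_mul_add_eq_of_natDegree_le (hb ℓ hℓ) hdeg', coeff_taylor_of_natDegree_le _ hdeg,
        hcoeff, mul_assoc]
    · rw [forwardDiff_pow_eq_zero_of_natDegree_lt (hx.trans_lt hsℓ),
        Nat.descFactorial_eq_zero_iff_lt.2 hsℓ]
      simp
  rw [diffAdjoint_eq_sum_forwardDiff, finsetSum_coeff, diffAdjointIndicial, sum_mul]
  exact ⟨natDegree_sum_le_of_forall_le _ _ fun ℓ hℓ => (hterm ℓ hℓ).1,
    sum_congr rfl fun ℓ hℓ => (hterm ℓ hℓ).2⟩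

namespace IsPowerPartible

variable {d : ℕ} {γ : R}

theorem comp_eq (h : IsPowerPartible J d a γ) {i : ℕ} (hi : i ≤ J) :
    (a i).comp (C γ + X) = (-1) ^ d * (a (J - i)).comp (C γ - X - (J : R[X])) := by
  rcases le_or_gt i (J / 2) with hi' | hi'
  · exact h i hi'
  have h' := congrArg (·.comp (-X - (J : R[X]))) (h (J - i) (by omega))
  simp only [Nat.sub_sub_self hi, mul_comp, pow_comp, neg_comp, one_comp, comp_assoc, add_comp,
    sub_comp, C_comp, X_comp, natCast_comp] at h'
  rw [show C γ + (-X - (J : R[X])) = C γ - X - (J : R[X]) by ring,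
    show C γ - (-X - (J : R[X])) - (J : R[X]) = C γ + X by ring] at h'
  rw [h', ← mul_assoc, ← pow_add, Even.neg_one_pow ⟨d, rfl⟩, one_mul]

theorem diffAdjoint_comp (h : IsPowerPartible J d a γ) (x : R[X]) :
    diffAdjoint J a (x.comp (C (2 * γ) - (J : R[X]) - X)) =
      (-1 : R) ^ d • (diffAdjoint J a x).comp (C (2 * γ) - X) := by
  rw [smul_eq_C_mul, map_pow, map_neg, map_one, diffAdjoint_apply, diffAdjoint_apply,
    Polynomial.sum_comp, mul_sum]
  conv_rhs => rw [← sum_range_reflect]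
  refine sum_congr rfl fun i hi => ?_
  have hiJ : i ≤ J := Nat.lt_succ_iff.1 (mem_range.1 hi)
  have hcast : ((J - i : ℕ) : R[X]) = J - i := Nat.cast_sub hiJ
  have hx : (C (2 * γ) - (J : R[X]) - X).comp (X - (i : R[X])) =
      (X - ((J - i : ℕ) : R[X])).comp (C (2 * γ) - X) := by
    simp only [sub_comp, C_comp, X_comp, natCast_comp, hcast]
    ring
  have ha : (a i).comp (X - (i : R[X])) =
      (-1) ^ d * (a (J - i)).comp ((X - ((J - i : ℕ) : R[X])).comp (C (2 * γ) - X)) := by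
    have h' := congrArg (·.comp (X - C γ - (i : R[X]))) (h.comp_eq hiJ)
    simp only [mul_comp, pow_comp, neg_comp, one_comp, comp_assoc, add_comp, sub_comp, C_comp,
      X_comp, natCast_comp] at h'
    rw [show C γ + (X - C γ - (i : R[X])) = X - (i : R[X]) by ring] at h'
    rw [h']
    congr 2
    simp only [sub_comp, X_comp, natCast_comp, hcast, C_mul, map_ofNat]
    ring
  rw [Nat.add_sub_cancel, comp_assoc, hx, ha, mul_comp, comp_assoc, comp_assoc]
  ring

end IsPowerPartible

end Adjoint

section Field

variable {K : Type*} [Field K] [NeZero (2 : K)]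

theorem mem_span_X_sub_C_pow_of_comp_eq {γ : K} {d m : ℕ} {p : K[X]} (hdeg : p.degree < d)
    (hp : p.comp (C (2 * γ) - X) = (-1 : K) ^ m • p) :
    p ∈ Submodule.span K ((fun i => (X - C γ) ^ i) '' {i | i < d ∧ i % 2 = m % 2}) := by
  have h1 : (-1 : K) ≠ 1 := fun h => two_ne_zero (α := K) (by linear_combination -h)
  -- in the coordinate `X - C γ` the reflection becomes `X ↦ -X`
  have hq : (taylor γ p).comp (C (-1) * X) = (-1 : K) ^ m • taylor γ p := by
    rw [← map_smul, ← hp, taylor_apply, taylor_apply, comp_assoc, comp_assoc]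
    congr 1
    simp only [add_comp, sub_comp, X_comp, C_comp]
    simp only [map_mul, map_neg, map_one, map_ofNat]
    ring
  rw [← sum_taylor_eq p γ, Polynomial.sum_def]
  refine Submodule.sum_mem _ fun i hi => ?_
  rw [← smul_eq_C_mul]
  refine Submodule.smul_mem _ _ (Submodule.subset_span ⟨i, ⟨?_, ?_⟩, rfl⟩)
  · exact_mod_cast (le_degree_of_mem_supp i hi).trans_lt ((degree_taylor p γ).trans_lt hdeg)
  · have hi' := congrArg (coeff · i) hq
    simp only [comp_C_mul_X_coeff, coeff_smul, smul_eq_mul] at hi'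
    exact mod_two_eq_of_neg_one_pow_eq h1
      (mul_left_cancel₀ (mem_support_iff.1 hi) (hi'.trans (mul_comm _ _)))

theorem mem_sup_span_X_sub_C_pow_of_comp_eq {S : Submodule K K[X]} {γ : K} {d m : ℕ}
    (hS : ∀ n, d ≤ n → ∃ q ∈ S, q.degree = n ∧ q.comp (C (2 * γ) - X) = (-1 : K) ^ n • q)
    (p : K[X]) (hp : p.comp (C (2 * γ) - X) = (-1 : K) ^ m • p) :
    p ∈ S ⊔ Submodule.span K ((fun i => (X - C γ) ^ i) '' {i | i < d ∧ i % 2 = m % 2}) := by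
  induction p using degree_lt_wf.induction with
  | h p ih =>
  by_cases hpd : p.degree < d
  · exact Submodule.mem_sup_right (mem_span_X_sub_C_pow_of_comp_eq hpd hp)
  have hp0 : p ≠ 0 := by rintro rfl; exact hpd (WithBot.bot_lt_coe d)
  rw [degree_eq_natDegree hp0, Nat.cast_lt, not_lt] at hpd
  obtain ⟨q, hqS, hqdeg, hq⟩ := hS _ hpd
  have hq0 : q ≠ 0 := by rintro rfl; simp at hqdeg
  have hsign := neg_one_pow_natDegree_eq_of_comp_eq hp0 hp
  have hlcp := leadingCoeff_ne_zero.2 hp0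
  have hlcq := leadingCoeff_ne_zero.2 hq0
  set c := p.leadingCoeff / q.leadingCoeff
  have hlc : (c • q).leadingCoeff = p.leadingCoeff := by
    rw [smul_eq_C_mul, leadingCoeff_mul, leadingCoeff_C, div_mul_cancel₀ _ hlcq]
  have hcq : (c • q).degree = p.degree := by
    rw [smul_eq_C_mul, degree_C_mul (div_ne_zero hlcp hlcq), hqdeg, degree_eq_natDegree hp0]
  have hlt : (p - c • q).degree < p.degree := degree_sub_lt_left hcq.symm hp0 hlc.symm
  have hsym : (p - c • q).comp (C (2 * γ) - X) = (-1 : K) ^ m • (p - c • q) := by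
    rw [sub_comp, smul_comp, hp, hq, hsign, smul_comm, smul_sub]
  rw [← sub_add_cancel p (c • q)]
  exact add_mem (ih _ hlt hsym) (Submodule.mem_sup_left (S.smul_mem c hqS))

theorem IsPowerPartible.exists_mem_range_diffAdjoint {J d : ℕ} {a : ℕ → K[X]} {γ : K}
    (h : IsPowerPartible J d a γ)
    (hb : ∀ ℓ ∈ range (J + 1), (diffAdjointCoeff J a ℓ).natDegree ≤ d + ℓ)
    (hf : ∀ s, diffAdjointIndicial J a d s ≠ 0) {n : ℕ} (hn : d ≤ n) :
    ∃ q ∈ LinearMap.range (diffAdjoint J a), q.degree = n ∧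
      q.comp (C (2 * γ) - X) = (-1 : K) ^ n • q := by
  obtain ⟨e, rfl⟩ := Nat.exists_eq_add_of_le' hn
  -- `γ - J / 2` is the centre of the reflection `k ↦ 2γ - J - k`
  set y : K[X] := (X - C (γ - J / 2)) ^ e
  have hy : y.comp (C (2 * γ) - (J : K[X]) - X) = (-1 : K) ^ e • y := by
    rw [← X_sub_C_pow_comp_C_two_mul_sub_X, ← C_eq_natCast, ← C_sub]
    congr 3
    field_simp
  have hydeg : y.natDegree = e := by rw [natDegree_pow, natDegree_X_sub_C, mul_one]
  obtain ⟨hdeg, hcoeff⟩ := natDegree_diffAdjoint_le_and_coeff hb hydeg.le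
  have hLy := h.diffAdjoint_comp y
  rw [hy, map_smul] at hLy
  refine ⟨_, LinearMap.mem_range_self _ y,
    degree_eq_of_le_of_coeff_ne_zero (natDegree_le_iff_degree_le.1 hdeg) ?_, ?_⟩
  · have hy1 : y.coeff e = 1 := hydeg ▸ ((monic_X_sub_C _).pow e).coeff_natDegree
    rw [hcoeff, hy1, mul_one]
    exact hf e
  · calc (diffAdjoint J a y).comp (C (2 * γ) - X)
        = ((-1 : K) ^ d * (-1) ^ d) • (diffAdjoint J a y).comp (C (2 * γ) - X) := by
          rw [← mul_pow, neg_one_mul, neg_neg, one_pow, one_smul]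
      _ = (-1 : K) ^ (e + d) • diffAdjoint J a y := by
          rw [mul_smul, ← hLy, smul_smul, ← pow_add, add_comm]

end Field

theorem power_partible_reduction_general {K : Type*} [Field K] [CharZero K]
    (J : ℕ) (a : ℕ → Polynomial K)
    (b : ℕ → Polynomial K)
    (hb : ∀ ℓ, b ℓ = ∑ j ∈ Finset.Icc ℓ J,
      (j.choose ℓ : K) • ((a (J - j)).comp (Polynomial.X + Polynomial.C ((j : K) - (J : K)))))
    (d : ℕ)
    (hd_le : ∀ ℓ ∈ Finset.range (J + 1), (b ℓ).degree ≤ ((d + ℓ : ℕ) : WithBot ℕ))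
    (f : ℕ → K)
    (hf : ∀ s : ℕ, f s = ∑ ℓ ∈ Finset.range (J + 1),
      (b ℓ).coeff (d + ℓ) * (s.descFactorial ℓ : K))
    (hnondeg : ∀ s : ℕ, f s ≠ 0)
    (γ : K)
    (hsym : ∀ i ≤ J / 2,
      (a i).comp (Polynomial.C γ + Polynomial.X)
        = (-1 : Polynomial K) ^ d *
          ((a (J - i)).comp (Polynomial.C γ - Polynomial.X - (J : Polynomial K))))
    (Lstar : Polynomial K → Polynomial K)
    (hLstar : ∀ x : Polynomial K, Lstar x = ∑ i ∈ Finset.range (J + 1),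
      ((a i).comp (Polynomial.X - (i : Polynomial K))) * (x.comp (Polynomial.X - (i : Polynomial K)))) :
    ∀ m : ℕ, 0 < m → ∃ x : Polynomial K,
      (Polynomial.X - Polynomial.C γ) ^ m - Lstar x ∈ Submodule.span K
        ((fun i : ℕ => (Polynomial.X - Polynomial.C γ) ^ i) ''
          {i : ℕ | i < d ∧ i % 2 = m % 2}) := by
  intro m _
  obtain rfl : b = diffAdjointCoeff J a := funext hb
  obtain rfl : f = diffAdjointIndicial J a d := funext hf
  obtain rfl : Lstar = diffAdjoint J a := funext hLstar
  have hmem := mem_sup_span_X_sub_C_pow_of_comp_eq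
    (fun _ hn => IsPowerPartible.exists_mem_range_diffAdjoint hsym
      (fun ℓ hℓ => natDegree_le_iff_degree_le.2 (hd_le ℓ hℓ)) hnondeg hn)
    _ (X_sub_C_pow_comp_C_two_mul_sub_X γ m)
  obtain ⟨_, ⟨x, rfl⟩, z, hz, hsum⟩ := Submodule.mem_sup.1 hmem
  exact ⟨x, by rwa [← hsum, add_sub_cancel_left]⟩

theorem power_partible_reduction {K : Type*} [Field K] [CharZero K]
    (J : ℕ) (a : ℕ → Polynomial K) (hJ : a J ≠ 0)
    (b : ℕ → Polynomial K)
    (hb : ∀ ℓ, b ℓ = ∑ j ∈ Finset.Icc ℓ J,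
      (j.choose ℓ : K) • ((a (J - j)).comp (Polynomial.X + Polynomial.C ((j : K) - (J : K)))))
    (d : ℕ)
    (hd_le : ∀ ℓ ∈ Finset.range (J + 1), (b ℓ).degree ≤ ((d + ℓ : ℕ) : WithBot ℕ))
    (hd_eq : ∃ ℓ ∈ Finset.range (J + 1), (b ℓ).degree = ((d + ℓ : ℕ) : WithBot ℕ))
    (f : ℕ → K)
    (hf : ∀ s : ℕ, f s = ∑ ℓ ∈ Finset.range (J + 1),
      (b ℓ).coeff (d + ℓ) * (s.descFactorial ℓ : K))
    (hnondeg : ∀ s : ℕ, f s ≠ 0)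
    (γ : K)
    (hsym : ∀ i ≤ J / 2,
      (a i).comp (Polynomial.C γ + Polynomial.X)
        = (-1 : Polynomial K) ^ d *
          ((a (J - i)).comp (Polynomial.C γ - Polynomial.X - (J : Polynomial K))))
    (Lstar : Polynomial K → Polynomial K)
    (hLstar : ∀ x : Polynomial K, Lstar x = ∑ i ∈ Finset.range (J + 1),
      ((a i).comp (Polynomial.X - (i : Polynomial K))) * (x.comp (Polynomial.X - (i : Polynomial K)))) :
    ∀ m : ℕ, 0 < m → ∃ x : Polynomial K,
      (Polynomial.X - Polynomial.C γ) ^ m - Lstar x ∈ Submodule.span K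
        ((fun i : ℕ => (Polynomial.X - Polynomial.C γ) ^ i) ''
          {i : ℕ | i < d ∧ i % 2 = m % 2}) :=
  power_partible_reduction_general J a b hb d hd_le f hf hnondeg γ hsym Lstar hLstar
end

section
/- For every integer n ≥ 1, the Apéry numbers satisfy the recurrence (n+1)^3 · A_{n+1} = (2n+1)(17n^2+17n+5) · A_n − n^3 · A_{n−1}. -/
/-!
Creative telescoping. Writing `b n k = (n choose k) * ((n + k) choose k)`, the summand is
`F n k = b n k ^ 2`, and with `G n k = 4 (2n+1) (2k² + k - (2n+1)²) F n k`,

  `(n+1)³ F (n+1) k - (2n+1)(17n² + 17n + 5) F n k + n³ F (n-1) k = G n k - G n (k-1)`,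

so summing over `k` makes the right-hand side telescope to zero. Each of the four values of `b`
involved is a rational multiple of `b (n+1) k` (the multipliers coming from the Pascal-type
relations of binomial coefficients, with denominators that never vanish), so the identity reduces
to one between rational functions of `n` and `k`, uniformly in `k`.
-/

open Finset

/-- The Apéry numbers `A n = ∑_{k=0}^n (n choose k)^2 ((n+k) choose k)^2`. -/
def apery (n : ℕ) : ℤ :=
  ∑ k ∈ Finset.range (n + 1), ((n.choose k : ℤ)) ^ 2 * (((n + k).choose k : ℤ)) ^ 2

def aperyBinom (n k : ℕ) : ℕ := n.choose k * (n + k).choose k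

lemma aperyBinom_eq_zero_of_lt {n k : ℕ} (h : n < k) : aperyBinom n k = 0 := by
  simp [aperyBinom, Nat.choose_eq_zero_of_lt h]

lemma aperyBinom_succ_left_eq (n k : ℕ) :
    ((n : ℚ) + 1 - k) * aperyBinom (n + 1) k = (n + k + 1) * aperyBinom n k := by
  rcases le_or_gt k (n + 1) with hk | hk
  · have h₁ : (n.choose k : ℚ) * (n + 1) = (n + 1).choose k * (n + 1 - k) := by
      exact_mod_cast Nat.choose_mul_succ_eq n k
    have h₂ : ((n + k).choose k : ℚ) * (n + k + 1) = (n + k + 1).choose k * (n + 1) := by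
      have := Nat.choose_mul_succ_eq (n + k) k
      rw [show n + k + 1 - k = n + 1 by omega] at this
      exact_mod_cast this
    refine mul_left_cancel₀ (by positivity : (n : ℚ) + 1 ≠ 0) ?_
    simp only [aperyBinom, Nat.cast_mul, show n + 1 + k = n + k + 1 by ring]
    linear_combination -((n + k).choose k * (n + k + 1) : ℚ) * h₁
      - ((n + 1).choose k * (n + 1 - k) : ℚ) * h₂
  · simp [aperyBinom_eq_zero_of_lt hk, aperyBinom_eq_zero_of_lt (Nat.lt_of_succ_lt hk)]

lemma aperyBinom_succ_succ_eq (n k : ℕ) :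
    (k + 1) ^ 2 * aperyBinom (n + 1) (k + 1) = (n + k + 1) * (n + k + 2) * aperyBinom n k := by
  have h₁ := Nat.add_one_mul_choose_eq n k
  have h₂ := Nat.add_one_mul_choose_eq (n + k + 1) k
  have h₃ := Nat.choose_mul_succ_eq (n + k) k
  rw [show n + k + 1 - k = n + 1 by omega] at h₃
  refine Nat.eq_of_mul_eq_mul_left n.succ_pos ?_
  simp only [aperyBinom, show n + 1 + (k + 1) = n + k + 1 + 1 by ring]
  calc (n + 1) * ((k + 1) ^ 2 * ((n + 1).choose (k + 1) * (n + k + 1 + 1).choose (k + 1)))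
      = ((n + 1).choose (k + 1) * (k + 1)) * ((n + k + 1 + 1).choose (k + 1) * (k + 1))
          * (n + 1) := by ring
    _ = ((n + 1) * n.choose k) * ((n + k + 1 + 1) * (n + k + 1).choose k) * (n + 1) := by
          rw [h₁, h₂]
    _ = (n + 1) * n.choose k * (n + k + 2) * ((n + k + 1).choose k * (n + 1)) := by ring
    _ = (n + 1) * ((n + k + 1) * (n + k + 2) * (n.choose k * (n + k).choose k)) := by
          rw [← h₃]; ring

/-- The certificate produced by Zeilberger's algorithm for the summand `aperyBinom n k ^ 2`. -/
def aperyCertificate (n k : ℕ) : ℚ :=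
  4 * (2 * n + 1) * (2 * k ^ 2 + k - (2 * n + 1) ^ 2) * (aperyBinom n k : ℚ) ^ 2

def aperyRecurrenceSummand (n k : ℕ) : ℚ :=
  ((n : ℚ) + 2) ^ 3 * (aperyBinom (n + 2) k : ℚ) ^ 2
    - (2 * n + 3) * (17 * (n + 1) ^ 2 + 17 * (n + 1) + 5) * (aperyBinom (n + 1) k : ℚ) ^ 2
    + ((n : ℚ) + 1) ^ 3 * (aperyBinom n k : ℚ) ^ 2

lemma aperyRecurrenceSummand_zero (n : ℕ) :
    aperyRecurrenceSummand n 0 = aperyCertificate (n + 1) 0 := by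
  simp only [aperyRecurrenceSummand, aperyCertificate, aperyBinom, Nat.choose_zero_right]
  push_cast
  ring

lemma aperyRecurrenceSummand_succ (n k : ℕ) :
    aperyRecurrenceSummand n (k + 1)
      = aperyCertificate (n + 1) (k + 1) - aperyCertificate (n + 1) k := by
  have h₁ := aperyBinom_succ_left_eq (n + 1) (k + 1)
  have h₂ := aperyBinom_succ_left_eq n (k + 1)
  have h₃ : ((k : ℚ) + 1) ^ 2 * aperyBinom (n + 2) (k + 1)
      = (n + k + 2) * (n + k + 3) * aperyBinom (n + 1) k := by
    have := aperyBinom_succ_succ_eq (n + 1) k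
    rw [show n + 1 + k + 1 = n + k + 2 by ring, show n + 1 + k + 2 = n + k + 3 by ring] at this
    exact_mod_cast this
  push_cast at h₁ h₂
  have hX : (aperyBinom (n + 1) (k + 1) : ℚ)
      = (n - k + 1) * aperyBinom (n + 2) (k + 1) / (n + k + 3) := by
    rw [eq_div_iff (by positivity)]; linear_combination -h₁
  have hY : (aperyBinom n (k + 1) : ℚ)
      = (n - k) * aperyBinom (n + 1) (k + 1) / (n + k + 2) := by
    rw [eq_div_iff (by positivity)]; linear_combination -h₂
  have hZ : (aperyBinom (n + 1) k : ℚ)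
      = (k + 1) ^ 2 * aperyBinom (n + 2) (k + 1) / ((n + k + 2) * (n + k + 3)) := by
    rw [eq_div_iff (by positivity)]; linear_combination -h₃
  rw [aperyRecurrenceSummand, aperyCertificate, aperyCertificate, hY, hZ, hX]
  push_cast
  field_simp
  ring

lemma sum_aperyRecurrenceSummand (n : ℕ) :
    ∑ k ∈ range (n + 3), aperyRecurrenceSummand n k = 0 := by
  rw [sum_range_succ', sum_congr rfl fun k _ ↦ aperyRecurrenceSummand_succ n k, sum_range_sub,
    aperyRecurrenceSummand_zero, aperyCertificate, aperyBinom_eq_zero_of_lt (by omega)]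
  ring

lemma apery_eq_sum_range {n N : ℕ} (h : n + 1 ≤ N) :
    (apery n : ℚ) = ∑ k ∈ range N, (aperyBinom n k : ℚ) ^ 2 := by
  rw [apery, ← sum_subset (range_subset_range.mpr h) fun k _ hk ↦ by
    rw [aperyBinom_eq_zero_of_lt (by simpa using hk)]; simp]
  push_cast [aperyBinom]
  simp only [mul_pow]

lemma apery_add_two (n : ℕ) :
    ((n : ℚ) + 2) ^ 3 * apery (n + 2)
      = (2 * n + 3) * (17 * (n + 1) ^ 2 + 17 * (n + 1) + 5) * apery (n + 1)
        - ((n : ℚ) + 1) ^ 3 * apery n := by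
  have h := sum_aperyRecurrenceSummand n
  simp only [aperyRecurrenceSummand, sum_add_distrib, sum_sub_distrib, ← mul_sum] at h
  rw [apery_eq_sum_range (N := n + 3) le_rfl, apery_eq_sum_range (N := n + 3) (by omega),
    apery_eq_sum_range (N := n + 3) (by omega)]
  linear_combination h

theorem apery_recurrence (n : ℕ) (hn : 1 ≤ n) :
    ((n : ℤ) + 1) ^ 3 * apery (n + 1)
      = (2 * n + 1) * (17 * (n : ℤ) ^ 2 + 17 * n + 5) * apery n - (n : ℤ) ^ 3 * apery (n - 1) := by
  obtain ⟨m, rfl⟩ := Nat.exists_eq_add_of_le' hn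
  rw [Nat.add_sub_cancel]
  apply Int.cast_injective (α := ℚ)
  push_cast
  linear_combination apery_add_two m
end

section
/- For every s ∈ ℕ there exist integers e_1, e_2, …, e_{⌊(s+3)/2⌋} such that the polynomial identity 2 k^3 (2k−1)^s − 2(2k+1)(17k^2+17k+5)(2k+1)^s + 2(k+1)^3 (2k+3)^s = −8 (2k+1)^{s+3} + ∑_{j=1}^{⌊(s+3)/2⌋} e_j (2k+1)^{s+3−2j} holds in ℤ[k]. -/
open Finset Polynomial

/-!
With `u = 2k + 1` one has `2k - 1 = u - 2`, `2k + 3 = u + 2`, `8k³ = (u - 1)³`, `8(k + 1)³ = (u + 1)³`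
and `4(2k + 1)(17k² + 17k + 5) = u(17u² + 3)`. Write `(u + 2)^s = u^s + 2 q(u)` with `deg q < s`
and put `g = (u + 1)³ q`. Then twice the left-hand side is `-16 u^(s+3) + g(u) + (-1)^(s+1) g(-u)`,
and since `deg g ≤ s + 2` the symmetrised part is twice the sum of the monomials `g_m u^m` with
`m ≤ s + 1`, `m ≡ s + 1 (mod 2)`. So `e_j` is the coefficient of `u^(s+3-2j)` in `g`.
-/

namespace Polynomial

variable {R : Type*} [CommRing R]

theorem coeff_comp_neg_X (p : R[X]) (m : ℕ) : (p.comp (-X)).coeff m = (-1) ^ m * p.coeff m := by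
  induction p using Polynomial.induction_on' with
  | add p q hp hq => rw [add_comp, coeff_add, coeff_add, hp, hq, mul_add]
  | monomial n a =>
    have hX : (-X : R[X]) ^ n = C ((-1) ^ n) * X ^ n := by rw [neg_pow]; simp
    rw [← C_mul_X_pow_eq_monomial, mul_comp, C_comp, X_pow_comp, hX, coeff_C_mul, coeff_C_mul,
      coeff_C_mul, coeff_X_pow]
    split_ifs with h
    · subst h; ring
    · simp

theorem add_neg_one_pow_mul_comp_neg_X (p : R[X]) (n : ℕ) (hp : p.degree < ↑(n + 2)) :
    p + (-1) ^ n * p.comp (-X) =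
      2 * ∑ j ∈ range (n / 2 + 1), C (p.coeff (n - 2 * j)) * X ^ (n - 2 * j) := by
  ext m
  have hsign : (-1 : R[X]) ^ n = C ((-1) ^ n) := by simp
  rw [coeff_add, hsign, coeff_C_mul, coeff_comp_neg_X, ← mul_assoc, ← pow_add, ← C_ofNat,
    coeff_C_mul, finsetSum_coeff]
  simp only [coeff_C_mul, coeff_X_pow, mul_ite, mul_one, mul_zero]
  by_cases hm : m ≤ n ∧ m % 2 = n % 2
  · rw [sum_eq_single ((n - m) / 2) (fun j hj _ => if_neg (by simp at hj; omega))
      (fun h => absurd (mem_range.mpr (by omega)) h), if_pos (by omega),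
      show n - 2 * ((n - m) / 2) = m by omega, Even.neg_one_pow (by rw [Nat.even_iff]; omega)]
    ring
  · rw [sum_eq_zero (fun j hj => if_neg (by simp at hj; omega))]
    rcases le_or_gt m (n + 1) with h | h
    · rw [Odd.neg_one_pow (by rw [Nat.odd_iff]; omega)]
      ring
    · rw [coeff_eq_zero_of_degree_lt (hp.trans_le (by exact_mod_cast h))]
      ring

theorem exists_X_add_C_pow_eq (a : R) (s : ℕ) :
    ∃ q : R[X], q.degree < s ∧ (X + C a) ^ s = X ^ s + C a * q := by
  induction s with
  | zero => exact ⟨0, by simp, by simp⟩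
  | succ s ih =>
    obtain ⟨q, hdeg, hq⟩ := ih
    refine ⟨X ^ s + (X + C a) * q, ?_, by rw [pow_succ, hq]; ring⟩
    rw [degree_lt_iff_coeff_zero] at hdeg ⊢
    intro m hm
    obtain ⟨m, rfl⟩ : ∃ k, m = k + 1 := ⟨m - 1, by omega⟩
    simp [add_mul, coeff_X_pow, coeff_X_mul, hdeg m (by omega), hdeg (m + 1) (by omega)]
    omega

end Polynomial

theorem Finset.sum_Icc_one_sub_two_mul {M : Type*} [AddCommMonoid M] (f : ℕ → M) (n : ℕ) :
    ∑ j ∈ Icc 1 ((n + 2) / 2), f (n + 2 - 2 * j) = ∑ j ∈ range (n / 2 + 1), f (n - 2 * j) := by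
  have hIcc : Icc 1 ((n + 2) / 2) = Ico (0 + 1) (n / 2 + 1 + 1) := by
    ext j; simp only [mem_Icc, mem_Ico]; omega
  rw [hIcc, ← sum_Ico_add', range_eq_Ico]
  exact sum_congr rfl fun j _ => congrArg f (by omega)

/-- `L*(x_s)` for `x_s(k) = 2(2k + 3)^s`, as a polynomial in `k = X`. -/
noncomputable def aperyAdjointOnPow (s : ℕ) : ℤ[X] :=
  2 * X ^ 3 * (2 * X - 1) ^ s - 2 * (2 * X + 1) * (17 * X ^ 2 + 17 * X + 5) * (2 * X + 1) ^ s
    + 2 * (X + 1) ^ 3 * (2 * X + 3) ^ s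

theorem two_mul_aperyAdjointOnPow (s : ℕ) {q : ℤ[X]} (hq : (X + 2) ^ s = X ^ s + 2 * q) :
    2 * aperyAdjointOnPow s =
      ((-16 : ℤ[X]) * X ^ (s + 3) + ((X + 1 : ℤ[X]) ^ 3 * q
        + (-1) ^ (s + 1) * ((X + 1 : ℤ[X]) ^ 3 * q).comp (-X))).comp (2 * X + 1) := by
  have hplus : (2 * X + 3 : ℤ[X]) ^ s = (2 * X + 1) ^ s + 2 * q.comp (2 * X + 1) := by
    have := congrArg (·.comp (2 * X + 1)) hq
    simp only [add_comp, mul_comp, pow_comp, X_comp, ofNat_comp, Nat.cast_ofNat] at this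
    rw [← this]; ring
  have hminus :
      (2 * X - 1 : ℤ[X]) ^ s = (2 * X + 1) ^ s + (-1) ^ s * 2 * q.comp (-(2 * X + 1)) := by
    have := congrArg (fun p => (-1) ^ s * p.comp (-(2 * X + 1))) hq
    simp only [add_comp, mul_comp, pow_comp, X_comp, ofNat_comp, Nat.cast_ofNat] at this
    rw [mul_add, ← mul_pow, ← mul_pow, neg_one_mul, neg_one_mul, neg_neg, ← mul_assoc] at this
    rw [← this]; ring
  simp only [aperyAdjointOnPow, add_comp, mul_comp, pow_comp, X_comp, neg_comp, ofNat_comp,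
    comp_assoc, one_comp, Nat.cast_ofNat]
  rw [hplus, hminus]
  ring

theorem apery_adjoint_structure (s : ℕ) :
    ∃ e : ℕ → ℤ,
      2 * Polynomial.X ^ 3 * (2 * Polynomial.X - 1) ^ s
        - 2 * (2 * Polynomial.X + 1) * (17 * Polynomial.X ^ 2 + 17 * Polynomial.X + 5) *
            (2 * Polynomial.X + 1) ^ s
        + 2 * (Polynomial.X + 1) ^ 3 * (2 * Polynomial.X + 3) ^ s
      = (-8 : Polynomial ℤ) * (2 * Polynomial.X + 1) ^ (s + 3)
        + ∑ j ∈ Finset.Icc 1 ((s + 3) / 2),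
            Polynomial.C (e j) * (2 * Polynomial.X + 1) ^ (s + 3 - 2 * j) := by
  obtain ⟨q, hq_deg, hq⟩ := exists_X_add_C_pow_eq (2 : ℤ) s
  rw [C_ofNat] at hq
  set g : ℤ[X] := (X + 1) ^ 3 * q
  have hg_deg : g.degree < ↑(s + 1 + 2) := by
    have hcube : ((X + 1 : ℤ[X]) ^ 3).degree = 3 := by compute_degree!
    rw [degree_mul, hcube, show ((s + 1 + 2 : ℕ) : WithBot ℕ) = 3 + s by push_cast; ring]
    exact WithBot.add_lt_add_left (by simp) hq_deg
  refine ⟨fun j => g.coeff (s + 3 - 2 * j), mul_left_cancel₀ (two_ne_zero' ℤ[X]) ?_⟩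
  change 2 * aperyAdjointOnPow s = _
  rw [two_mul_aperyAdjointOnPow s hq, add_neg_one_pow_mul_comp_neg_X g (s + 1) hg_deg,
    sum_Icc_one_sub_two_mul (fun m => C (g.coeff m) * (2 * X + 1) ^ m) (s + 1)]
  simp only [add_comp, mul_comp, Polynomial.sum_comp, C_comp, X_pow_comp, ofNat_comp, neg_comp,
    Nat.cast_ofNat]
  ring
end

section
/- For every s ∈ ℕ there exist integers e_1, e_2, …, e_{⌊(s+3)/2⌋} such that the polynomial identity 2 k^3 (2k−1)^s + 2(2k+1)(17k^2+17k+5)(2k+1)^s + 2(k+1)^3 (2k+3)^s = 9 (2k+1)^{s+3} + ∑_{j=1}^{⌊(s+3)/2⌋} e_j (2k+1)^{s+3−2j} holds in ℤ[k]. -/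
/-!
Write `u = 2k + 1`, so that the bases are `u - 2`, `u`, `u + 2`. Expanding in powers of `u`
directly produces halves (`k = (u - 1) / 2`), so the integrality of the `e_j` is the real content.
Instead, `L̃*(x_s) - 9 u^(s+3)` satisfies the linear recurrence in `s` with characteristic roots
`u - 2, u, u + 2`, whose coefficients keep each term inside the integer span of
`u^(s+1), u^(s-1), …`; induction from `s = 0, 1, 2` concludes.
-/

open Finset Polynomial

section ParityPowSpan

variable {R : Type*} [CommRing R]

def parityPowSpan (u : R) (n : ℕ) : Submodule ℤ R :=
  Submodule.span ℤ ((fun j => u ^ (n - 2 * j)) '' ↑(Icc 1 (n / 2)))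

variable {u x : R} {n : ℕ}

theorem pow_mem_parityPowSpan (m : ℕ) : u ^ m ∈ parityPowSpan u (m + 2) :=
  Submodule.subset_span ⟨1, by simp, by simp⟩

theorem parityPowSpan_le_add_two : parityPowSpan u n ≤ parityPowSpan u (n + 2) := by
  refine Submodule.span_le.2 ?_
  rintro _ ⟨j, hj, rfl⟩
  rw [coe_Icc, Set.mem_Icc] at hj
  refine Submodule.subset_span ⟨j + 1, by rw [coe_Icc, Set.mem_Icc]; omega, ?_⟩
  exact congrArg (u ^ ·) (by omega)

theorem mul_mem_parityPowSpan_succ (hx : x ∈ parityPowSpan u n) :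
    u * x ∈ parityPowSpan u (n + 1) := by
  induction hx using Submodule.span_induction with
  | mem y hy =>
    obtain ⟨j, hj, rfl⟩ := hy
    rw [coe_Icc, Set.mem_Icc] at hj
    refine Submodule.subset_span ⟨j, by rw [coe_Icc, Set.mem_Icc]; omega, ?_⟩
    rw [← pow_succ']
    exact congrArg (u ^ ·) (by omega)
  | zero => simp
  | add y z _ _ hy hz => rw [mul_add]; exact add_mem hy hz
  | smul c y _ hy => rw [mul_smul_comm]; exact Submodule.smul_mem _ c hy

theorem exists_eq_sum_of_mem_parityPowSpan (hx : x ∈ parityPowSpan u n) :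
    ∃ e : ℕ → ℤ, x = ∑ j ∈ Icc 1 (n / 2), e j • u ^ (n - 2 * j) := by
  obtain ⟨l, hl, rfl⟩ := (Finsupp.mem_span_image_iff_linearCombination ℤ).mp hx
  exact ⟨l, Finsupp.linearCombination_apply_of_mem_supported ℤ hl⟩

end ParityPowSpan

section AperyAdjoint

variable {R : Type*} [CommRing R]

/-- `L̃*(x_s)(k)` for `x_s(k) = 2 (2k+3)^s`, where `L̃` annihilates `(-1)^k A_k`. -/
def aperyAdjoint (k : R) (s : ℕ) : R :=
  2 * k ^ 3 * (2 * k - 1) ^ s + 2 * (2 * k + 1) * (17 * k ^ 2 + 17 * k + 5) * (2 * k + 1) ^ s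
    + 2 * (k + 1) ^ 3 * (2 * k + 3) ^ s

def aperyAdjointRemainder (k : R) (s : ℕ) : R :=
  aperyAdjoint k s - 9 * (2 * k + 1) ^ (s + 3)

/-- With `u = 2k + 1`, the bases `u - 2`, `u`, `u + 2` are the roots of
`x³ - 3u x² + (3u² - 4) x - (u³ - 4u)`. -/
theorem aperyAdjointRemainder_add_three (k : R) (s : ℕ) :
    aperyAdjointRemainder k (s + 3)
      = (3 : ℤ) • ((2 * k + 1) * aperyAdjointRemainder k (s + 2))
        - (3 : ℤ) • ((2 * k + 1) * ((2 * k + 1) * aperyAdjointRemainder k (s + 1)))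
        + (4 : ℤ) • aperyAdjointRemainder k (s + 1)
        + (2 * k + 1) * ((2 * k + 1) * ((2 * k + 1) * aperyAdjointRemainder k s))
        - (4 : ℤ) • ((2 * k + 1) * aperyAdjointRemainder k s) := by
  simp only [aperyAdjointRemainder, aperyAdjoint, zsmul_eq_mul]
  push_cast
  ring

theorem aperyAdjointRemainder_mem_parityPowSpan (k : R) :
    ∀ s, aperyAdjointRemainder k s ∈ parityPowSpan (2 * k + 1) (s + 3)
  | 0 => by
    have h : aperyAdjointRemainder k 0 = (3 : ℤ) • (2 * k + 1) ^ 1 := by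
      simp only [aperyAdjointRemainder, aperyAdjoint, zsmul_eq_mul]; push_cast; ring
    rw [h]
    exact Submodule.smul_mem _ _ (pow_mem_parityPowSpan 1)
  | 1 => by
    have h : aperyAdjointRemainder k 1 = (6 : ℤ) • (2 * k + 1) ^ 2 + (2 * k + 1) ^ 0 := by
      simp only [aperyAdjointRemainder, aperyAdjoint, zsmul_eq_mul]; push_cast; ring
    rw [h]
    exact add_mem (Submodule.smul_mem _ _ (pow_mem_parityPowSpan 2))
      (parityPowSpan_le_add_two (pow_mem_parityPowSpan 0))
  | 2 => by
    have h : aperyAdjointRemainder k 2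
        = (11 : ℤ) • (2 * k + 1) ^ 3 + (8 : ℤ) • (2 * k + 1) ^ 1 := by
      simp only [aperyAdjointRemainder, aperyAdjoint, zsmul_eq_mul]; push_cast; ring
    rw [h]
    exact add_mem (Submodule.smul_mem _ _ (pow_mem_parityPowSpan 3))
      (Submodule.smul_mem _ _ (parityPowSpan_le_add_two (pow_mem_parityPowSpan 1)))
  | s + 3 => by
    have h0 := aperyAdjointRemainder_mem_parityPowSpan k s
    have h1 := aperyAdjointRemainder_mem_parityPowSpan k (s + 1)
    have h2 := aperyAdjointRemainder_mem_parityPowSpan k (s + 2)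
    rw [aperyAdjointRemainder_add_three]
    have mul := @mul_mem_parityPowSpan_succ
    refine Submodule.sub_mem _
      (Submodule.add_mem _ (Submodule.add_mem _ (Submodule.sub_mem _ ?_ ?_) ?_) ?_) ?_
    · exact Submodule.smul_mem _ _ (mul h2)
    · exact Submodule.smul_mem _ _ (mul (mul h1))
    · exact Submodule.smul_mem _ _ (parityPowSpan_le_add_two h1)
    · exact mul (mul (mul h0))
    · exact Submodule.smul_mem _ _ (parityPowSpan_le_add_two (mul h0))

end AperyAdjoint

theorem apery_alternating_adjoint_structure (s : ℕ) :
    ∃ e : ℕ → ℤ,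
      2 * Polynomial.X ^ 3 * (2 * Polynomial.X - 1) ^ s
        + 2 * (2 * Polynomial.X + 1) * (17 * Polynomial.X ^ 2 + 17 * Polynomial.X + 5) *
            (2 * Polynomial.X + 1) ^ s
        + 2 * (Polynomial.X + 1) ^ 3 * (2 * Polynomial.X + 3) ^ s
      = (9 : Polynomial ℤ) * (2 * Polynomial.X + 1) ^ (s + 3)
        + ∑ j ∈ Finset.Icc 1 ((s + 3) / 2),
            Polynomial.C (e j) * (2 * Polynomial.X + 1) ^ (s + 3 - 2 * j) := by
  obtain ⟨e, he⟩ :=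
    exists_eq_sum_of_mem_parityPowSpan (aperyAdjointRemainder_mem_parityPowSpan (X : ℤ[X]) s)
  refine ⟨e, ?_⟩
  simp only [C_mul', ← he, aperyAdjointRemainder, aperyAdjoint]
  ring
end

section
/- For every z ∈ ℤ and every k ∈ ℕ, the central Delannoy polynomials satisfy the recurrence (k+2) · D_{k+2}(z) = (2k+3)(2z+1) · D_{k+1}(z) − (k+1) · D_k(z). -/
/-!
The coefficient `a(k, i) = (k choose i) ((k + i) choose i)` of `zⁱ` in `D_k(z)` satisfies
`a(k, i) (i!)² = (k + i)(k + i - 1) ⋯ (k - i + 1)`, a falling factorial of length `2i` that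
vanishes exactly when `i > k`. Comparing coefficients of `z^(i+1)` in the recurrence, all four
coefficients involved are multiples of the same falling factorial `(k + i + 1) ⋯ (k - i + 2)`,
and what remains is a polynomial identity in `k` and `i`.
-/

open Finset

/-- The central Delannoy polynomials `D k (z) = ∑_{i=0}^k (k choose i) ((k+i) choose i) z^i`. -/
def delannoy (k : ℕ) (z : ℤ) : ℤ :=
  ∑ i ∈ Finset.range (k + 1), (k.choose i : ℤ) * ((k + i).choose i : ℤ) * z ^ i

open Polynomial

theorem descPochhammer_eval_succ_left {R : Type*} [CommRing R] (n : ℕ) (a : R) :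
    (descPochhammer R (n + 1)).eval a = a * (descPochhammer R n).eval (a - 1) := by
  rw [descPochhammer_succ_left, eval_mul, eval_X, eval_comp, eval_sub, eval_X, eval_one]

def delannoyCoeff (k i : ℕ) : ℤ :=
  k.choose i * (k + i).choose i

theorem delannoyCoeff_mul_factorial_sq (k i : ℕ) :
    delannoyCoeff k i * (i.factorial : ℤ) ^ 2
      = (descPochhammer ℤ (2 * i)).eval ((k : ℤ) + i) := by
  have h := Nat.descFactorial_mul_descFactorial (n := k + i) (k := i) (m := 2 * i) (by omega)
  rw [Nat.add_sub_cancel, show 2 * i - i = i by omega, Nat.descFactorial_eq_factorial_mul_choose,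
    Nat.descFactorial_eq_factorial_mul_choose] at h
  rw [← Nat.cast_add, descPochhammer_eval_eq_descFactorial, ← h, delannoyCoeff]
  push_cast
  ring

theorem delannoyCoeff_recurrence (k i : ℕ) :
    ((k : ℤ) + 2) * delannoyCoeff (k + 2) (i + 1) + ((k : ℤ) + 1) * delannoyCoeff k (i + 1)
      = (2 * (k : ℤ) + 3) * delannoyCoeff (k + 1) (i + 1)
        + 2 * (2 * (k : ℤ) + 3) * delannoyCoeff (k + 1) i := by
  set x : ℤ := k + i + 1
  set P := (descPochhammer ℤ (2 * i)).eval x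
  have h2i : 2 * (i + 1) = 2 * i + 1 + 1 := by ring
  have hk2 : delannoyCoeff (k + 2) (i + 1) * ((i + 1).factorial : ℤ) ^ 2
      = (x + 2) * (x + 1) * P := by
    rw [delannoyCoeff_mul_factorial_sq, h2i,
      show ((k + 2 : ℕ) : ℤ) + (i + 1 : ℕ) = x + 1 + 1 by push_cast; ring,
      descPochhammer_eval_succ_left, descPochhammer_eval_succ_left]
    simp only [add_sub_cancel_right]
    ring
  have hk1 : delannoyCoeff (k + 1) (i + 1) * ((i + 1).factorial : ℤ) ^ 2
      = (x + 1) * P * (x - 2 * i) := by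
    rw [delannoyCoeff_mul_factorial_sq, h2i,
      show ((k + 1 : ℕ) : ℤ) + (i + 1 : ℕ) = x + 1 by push_cast; ring,
      descPochhammer_eval_succ_left, descPochhammer_succ_eval, add_sub_cancel_right]
    push_cast
    ring
  have hk0 : delannoyCoeff k (i + 1) * ((i + 1).factorial : ℤ) ^ 2
      = P * (x - 2 * i) * (x - 2 * i - 1) := by
    rw [delannoyCoeff_mul_factorial_sq, h2i, show (k : ℤ) + (i + 1 : ℕ) = x by push_cast; ring,
      descPochhammer_succ_eval, descPochhammer_succ_eval]
    push_cast
    ring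
  have hk1_shift : delannoyCoeff (k + 1) i * ((i + 1).factorial : ℤ) ^ 2 = (i + 1) ^ 2 * P := by
    rw [Nat.factorial_succ, Nat.cast_mul, mul_pow, mul_left_comm, delannoyCoeff_mul_factorial_sq,
      show ((k + 1 : ℕ) : ℤ) + i = x by push_cast; ring]
    push_cast
    ring
  refine mul_right_cancel₀ (by positivity : ((i + 1).factorial : ℤ) ^ 2 ≠ 0) ?_
  linear_combination (k + 2 : ℤ) * hk2 + (k + 1 : ℤ) * hk0 - (2 * k + 3 : ℤ) * hk1
    - 2 * (2 * k + 3 : ℤ) * hk1_shift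

theorem delannoy_eq_sum_range {k N : ℕ} (h : k < N) (z : ℤ) :
    delannoy k z = ∑ i ∈ range N, delannoyCoeff k i * z ^ i := by
  refine sum_subset (range_subset_range.2 h) fun i _ hi => ?_
  simp [Nat.choose_eq_zero_of_lt (show k < i by simpa using hi)]

theorem delannoy_eq_one_add_sum_range {k N : ℕ} (h : k ≤ N) (z : ℤ) :
    delannoy k z = 1 + ∑ i ∈ range N, delannoyCoeff k (i + 1) * z ^ (i + 1) := by
  rw [delannoy_eq_sum_range (Nat.lt_succ_of_le h), sum_range_succ', add_comm]
  simp [delannoyCoeff]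

theorem mul_delannoy (k : ℕ) (z : ℤ) :
    z * delannoy k z = ∑ i ∈ range (k + 1), delannoyCoeff k i * z ^ (i + 1) := by
  rw [delannoy, mul_sum]
  refine sum_congr rfl fun i _ => ?_
  rw [delannoyCoeff]
  ring

theorem delannoy_recurrence (z : ℤ) (k : ℕ) :
    ((k : ℤ) + 2) * delannoy (k + 2) z
      = (2 * (k : ℤ) + 3) * (2 * z + 1) * delannoy (k + 1) z - ((k : ℤ) + 1) * delannoy k z := by
  set S := fun n => ∑ i ∈ range (k + 2), delannoyCoeff n (i + 1) * z ^ (i + 1)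
  have hS : ((k : ℤ) + 2) * S (k + 2) + ((k : ℤ) + 1) * S k
      = (2 * (k : ℤ) + 3) * S (k + 1) + 2 * (2 * (k : ℤ) + 3) * (z * delannoy (k + 1) z) := by
    simp only [S, mul_delannoy, mul_sum, ← sum_add_distrib]
    exact sum_congr rfl fun i _ => by
      linear_combination z ^ (i + 1) * delannoyCoeff_recurrence k i
  linear_combination ((k : ℤ) + 2) * delannoy_eq_one_add_sum_range le_rfl z
    + ((k : ℤ) + 1) * delannoy_eq_one_add_sum_range (by omega : k ≤ k + 2) z
    - (2 * (k : ℤ) + 3) * delannoy_eq_one_add_sum_range (by omega : k + 1 ≤ k + 2) z + hS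
end

section
/- For every s ∈ ℕ there exist integers e_1, e_2, …, e_{⌊(s+1)/2⌋} (not depending on z) such that for every z the polynomial identity 2 k (2k−1)^s − 2(2k+1)(2z+1)(2k+1)^s + 2(k+1)(2k+3)^s = −4z (2k+1)^{s+1} + ∑_{j=1}^{⌊(s+1)/2⌋} e_j (2k+1)^{s+1−2j} holds in ℤ[k] (equivalently, in ℤ[z][k]). -/
/-!
Substitute `X = 2k + 1`. Then `2(k+1)(2k+3)^s = q(X)` and `2k(2k-1)^s = (-1)^(s+1) q(-X)` with
`q = (X + 1)(X + 2)^s`, so the left-hand side is `-4z X^(s+1) + p(X)`, where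
`p = r + (-1)^(s+1) r(-X)` and `r = q - X^(s+1)` (`delannoyDefect s`). Symmetrizing kills the coefficients of `r` of the
wrong parity, and `r` has degree at most `s` since `q` is monic of degree `s + 1`; so `p` is a
combination of `X^(s+1-2j)` with `j ≥ 1`.
-/

open Finset Polynomial

namespace Polynomial

variable {R : Type*}

lemma coeff_add_neg_one_pow_mul_comp_neg_X [CommRing R] (p : R[X]) (n m : ℕ) :
    (p + (-1) ^ n * p.comp (-X)).coeff m = (1 + (-1) ^ (n + m)) * p.coeff m := by
  rw [← neg_one_mul (X : R[X]), ← C_1, ← C_neg, ← C_pow, coeff_add, coeff_C_mul,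
    comp_C_mul_X_coeff]
  ring

lemma natDegree_add_neg_one_pow_mul_comp_neg_X_le [CommRing R] (p : R[X]) (n : ℕ) :
    (p + (-1) ^ n * p.comp (-X)).natDegree ≤ p.natDegree := by
  rw [natDegree_le_iff_coeff_eq_zero]
  intro m hm
  rw [coeff_add_neg_one_pow_mul_comp_neg_X, coeff_eq_zero_of_natDegree_lt hm, mul_zero]

lemma coeff_add_neg_one_pow_mul_comp_neg_X_of_odd [CommRing R] (p : R[X]) {n m : ℕ}
    (h : Odd (n + m)) : (p + (-1) ^ n * p.comp (-X)).coeff m = 0 := by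
  rw [coeff_add_neg_one_pow_mul_comp_neg_X, h.neg_one_pow, add_neg_cancel, zero_mul]

lemma eq_sum_Icc_C_mul_X_pow_of_coeff_eq_zero [Semiring R] {p : R[X]} {n : ℕ}
    (hdeg : p.natDegree < n) (hpar : ∀ m, Odd (n + m) → p.coeff m = 0) :
    p = ∑ j ∈ Icc 1 (n / 2), C (p.coeff (n - 2 * j)) * X ^ (n - 2 * j) := by
  ext m
  simp only [finsetSum_coeff, coeff_C_mul_X_pow]
  by_cases hm : m < n ∧ Even (n + m)
  · obtain ⟨hmn, k, hk⟩ := hm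
    rw [Finset.sum_eq_single_of_mem ((n - m) / 2) (by rw [mem_Icc]; omega),
      if_pos (by omega), show n - 2 * ((n - m) / 2) = m by omega]
    intro j hj hne
    rw [mem_Icc] at hj
    exact if_neg (by omega)
  · rw [Finset.sum_eq_zero]
    · rcases not_and_or.mp hm with hm | hm
      · exact coeff_eq_zero_of_natDegree_lt (by omega)
      · exact hpar m (Nat.not_even_iff_odd.mp hm)
    · intro j hj
      rw [mem_Icc] at hj
      exact if_neg fun hmj => hm ⟨by omega, n - j, by omega⟩

lemma exists_eq_sum_Icc_of_natDegree_lt [CommRing R] {r : R[X]} {n : ℕ}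
    (hr : r.natDegree < n) :
    ∃ e : ℕ → R,
      r + (-1) ^ n * r.comp (-X) = ∑ j ∈ Icc 1 (n / 2), C (e j) * X ^ (n - 2 * j) :=
  ⟨_, eq_sum_Icc_C_mul_X_pow_of_coeff_eq_zero
    ((natDegree_add_neg_one_pow_mul_comp_neg_X_le r n).trans_lt hr)
    fun _ => coeff_add_neg_one_pow_mul_comp_neg_X_of_odd r⟩

end Polynomial

noncomputable def delannoyDefect (s : ℕ) : ℤ[X] := (X + 1) * (X + 2) ^ s - X ^ (s + 1)

lemma natDegree_delannoyDefect_lt (s : ℕ) : (delannoyDefect s).natDegree < s + 1 := by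
  have hq : IsMonicOfDegree ((X + 1) * (X + 2) ^ s : ℤ[X]) (s + 1) := by
    simpa [add_comm] using
      (isMonicOfDegree_X_add_one (1 : ℤ)).mul ((isMonicOfDegree_X_add_one (2 : ℤ)).pow s)
  exact hq.natDegree_sub_X_pow s.succ_ne_zero

lemma neg_one_pow_mul_delannoyDefect_comp_neg_X (s : ℕ) :
    (-1) ^ (s + 1) * (delannoyDefect s).comp (-X) = (X - 1) * (X - 2) ^ s - X ^ (s + 1) := by
  have hsq : ((-1 : ℤ[X]) ^ (s + 1)) * (-1) ^ (s + 1) = 1 := by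
    rw [← mul_pow, neg_one_mul, neg_neg, one_pow]
  simp only [delannoyDefect, sub_comp, mul_comp, pow_comp, add_comp, X_comp, one_comp,
    ofNat_comp, Nat.cast_ofNat]
  rw [show -X + 1 = -(X - 1 : ℤ[X]) by ring, show -X + 2 = -(X - 2 : ℤ[X]) by ring,
    neg_pow (X - 2 : ℤ[X]), neg_pow (X : ℤ[X]), pow_succ (-1 : ℤ[X]) s]
  linear_combination ((X - 1) * (X - 2) ^ s - X ^ (s + 1)) * hsq

lemma delannoy_adjoint_eq_comp (s : ℕ) (z : ℤ) :
    2 * X * (2 * X - 1) ^ s - 2 * (2 * X + 1) * C (2 * z + 1) * (2 * X + 1) ^ s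
        + 2 * (X + 1) * (2 * X + 3) ^ s
      = C (-4 * z) * (2 * X + 1) ^ (s + 1)
        + (delannoyDefect s + (-1) ^ (s + 1) * (delannoyDefect s).comp (-X)).comp (2 * X + 1) := by
  rw [neg_one_pow_mul_delannoyDefect_comp_neg_X]
  simp only [delannoyDefect, add_comp, sub_comp, mul_comp, pow_comp, X_comp, one_comp,
    ofNat_comp, Nat.cast_ofNat, C_mul, C_add, C_neg, C_1, map_ofNat]
  ring

theorem delannoy_adjoint_structure (s : ℕ) :
    ∃ e : ℕ → ℤ, ∀ z : ℤ,
      2 * Polynomial.X * (2 * Polynomial.X - 1) ^ s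
        - 2 * (2 * Polynomial.X + 1) * Polynomial.C (2 * z + 1) * (2 * Polynomial.X + 1) ^ s
        + 2 * (Polynomial.X + 1) * (2 * Polynomial.X + 3) ^ s
      = Polynomial.C (-4 * z) * (2 * Polynomial.X + 1) ^ (s + 1)
        + ∑ j ∈ Finset.Icc 1 ((s + 1) / 2),
            Polynomial.C (e j) * ((2 : Polynomial ℤ) * Polynomial.X + 1) ^ (s + 1 - 2 * j) := by
  obtain ⟨e, he⟩ := exists_eq_sum_Icc_of_natDegree_lt (natDegree_delannoyDefect_lt s)
  refine ⟨e, fun z => ?_⟩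
  rw [delannoy_adjoint_eq_comp, he, Polynomial.sum_comp]
  simp only [mul_comp, C_comp, pow_comp, X_comp]
end
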